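/- arXiv:1911.04083 — 2 statements merged into one kernel-verified Lean document; each statement's English description precedes it below -/
import Mathlib

section
/- Let R be a standard graded K-algebra with finite-dimensional graded components. If R has the weak Lefschetz property (there exists a linear form ℓ such that multiplication by ℓ from R_i to R_{i+1} has full rank for all i ≥ 0), then the Hilbert function of R is either increasing or unimodal. -/
/-!
Let `ℓ` be the Lefschetz element. Because `R` is generated in degree one, surjectivity
of `·ℓ : R_i → R_{i+1}` propagates to all higher degrees:
`R_{i+2} = R_1 R_{i+1} = R_1 ℓ R_i = ℓ R_{i+1}`.
So if `k` is the first degree where `·ℓ` fails to be injective, it is injective below `k` and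
surjective from `k` on, and the Hilbert function rises up to `k` and falls after it.
-/

open Function

theorem monotone_or_unimodal_of_upward_closed {α : Type*} [Preorder α] {f : ℕ → α}
    (S : ℕ → Prop) (hS : ∀ i, S i → S (i + 1))
    (hup : ∀ i, ¬ S i → f i ≤ f (i + 1)) (hdown : ∀ i, S i → f (i + 1) ≤ f i) :
    Monotone f ∨ ∃ k, MonotoneOn f (Set.Iic k) ∧ AntitoneOn f (Set.Ici k) := by
  classical
  by_cases hex : ∃ k, S k
  · right
    refine ⟨Nat.find hex, ?_, antitoneOn_nat_Ici_of_succ_le fun n hn => hdown n ?_⟩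
    · refine monotoneOn_of_le_succ Set.ordConnected_Iic fun n _ _ hsucc => hup n ?_
      exact Nat.find_min hex (Order.succ_le_iff.mp hsucc)
    · induction n, hn using Nat.le_induction with
      | base => exact Nat.find_spec hex
      | succ n _ ih => exact hS n ih
  · exact .inl (monotone_nat_of_le_succ fun n => hup n (not_exists.mp hex n))

section GradedMulLeft

variable {K A : Type*} [Field K] [CommRing A] [Algebra K A]
  (𝒜 : ℕ → Submodule K A) [SetLike.GradedMonoid 𝒜] {x : A} (hx : x ∈ 𝒜 1)

def gradedMulLeft (i : ℕ) : 𝒜 i →ₗ[K] 𝒜 (i + 1) :=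
  (LinearMap.mulLeft K x).restrict fun _ ha => add_comm 1 i ▸ SetLike.mul_mem_graded hx ha

variable {𝒜}

theorem injective_gradedMulLeft_iff {i : ℕ} :
    Injective (gradedMulLeft 𝒜 hx i) ↔ ∀ a ∈ 𝒜 i, ∀ b ∈ 𝒜 i, x * a = x * b → a = b := by
  refine ⟨fun h a ha b hb hab => ?_, fun h a b hab => Subtype.ext ?_⟩
  · exact congrArg Subtype.val (@h ⟨a, ha⟩ ⟨b, hb⟩ (Subtype.ext hab))
  · exact h a a.2 b b.2 (congrArg Subtype.val hab)

theorem surjective_gradedMulLeft_iff {i : ℕ} :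
    Surjective (gradedMulLeft 𝒜 hx i) ↔ ∀ c ∈ 𝒜 (i + 1), ∃ a ∈ 𝒜 i, x * a = c := by
  refine ⟨fun h c hc => ?_, fun h c => ?_⟩
  · obtain ⟨a, hac⟩ := h ⟨c, hc⟩
    exact ⟨a, a.2, congrArg Subtype.val hac⟩
  · obtain ⟨a, ha, hac⟩ := h c c.2
    exact ⟨⟨a, ha⟩, Subtype.ext hac⟩

theorem surjective_gradedMulLeft_succ {i : ℕ} (hgen : 𝒜 (i + 1 + 1) = 𝒜 1 * 𝒜 (i + 1))
    (h : Surjective (gradedMulLeft 𝒜 hx i)) : Surjective (gradedMulLeft 𝒜 hx (i + 1)) := by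
  rw [surjective_gradedMulLeft_iff] at h ⊢
  intro c hc
  rw [hgen] at hc
  refine Submodule.mul_induction_on hc (fun y hy z hz => ?_) ?_
  · obtain ⟨a, ha, rfl⟩ := h z hz
    exact ⟨y * a, add_comm 1 i ▸ SetLike.mul_mem_graded hy ha, mul_left_comm x y a⟩
  · rintro _ _ ⟨a₁, ha₁, rfl⟩ ⟨a₂, ha₂, rfl⟩
    exact ⟨a₁ + a₂, add_mem ha₁ ha₂, mul_add x a₁ a₂⟩

end GradedMulLeft

theorem wlp_implies_increasing_or_unimodal_hilbert_function_general
    {K A : Type} [Field K] [CommRing A] [Algebra K A]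
    (𝒜 : ℕ → Submodule K A) [GradedAlgebra 𝒜]
    (hfin : ∀ i : ℕ, Module.Finite K (𝒜 i))
    (hstd : ∀ n : ℕ, 𝒜 (n + 1) = 𝒜 1 * 𝒜 n)
    (hWLP : ∃ e ∈ 𝒜 1, ∀ i : ℕ,
      (∀ a ∈ 𝒜 i, ∀ b ∈ 𝒜 i, e * a = e * b → a = b) ∨
      (∀ c ∈ 𝒜 (i + 1), ∃ a ∈ 𝒜 i, e * a = c)) :
    Monotone (fun i : ℕ => Module.finrank K (𝒜 i)) ∨
    ∃ k : ℕ,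
      (∀ i j : ℕ, i ≤ j → j ≤ k → Module.finrank K (𝒜 i) ≤ Module.finrank K (𝒜 j)) ∧
      (∀ i j : ℕ, k ≤ i → i ≤ j → Module.finrank K (𝒜 j) ≤ Module.finrank K (𝒜 i)) := by
  obtain ⟨e, he, hWLP⟩ := hWLP
  have hinj : ∀ i, ¬ Surjective (gradedMulLeft 𝒜 he i) → Injective (gradedMulLeft 𝒜 he i) :=
    fun i hs => (injective_gradedMulLeft_iff he).2 <|
      (hWLP i).resolve_right (mt (surjective_gradedMulLeft_iff he).2 hs)
  refine (monotone_or_unimodal_of_upward_closed (fun i => Surjective (gradedMulLeft 𝒜 he i))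
      (fun i => surjective_gradedMulLeft_succ he (hstd (i + 1)))
      (fun i hs => LinearMap.finrank_le_finrank_of_injective (hinj i hs))
      (fun i => LinearMap.finrank_le_finrank_of_surjective)).imp id ?_
  rintro ⟨k, hmono, hanti⟩
  exact ⟨k, fun i j hij hjk => hmono (hij.trans hjk) hjk hij,
    fun i j hki hij => hanti hki (hki.trans hij) hij⟩

/-- A standard graded algebra over a field `K` with finite dimensional graded components
having the weak Lefschetz property has an increasing (i.e. non-decreasing) or
unimodal Hilbert function. -/
theorem wlp_implies_increasing_or_unimodal_hilbert_function
    {K A : Type} [Field K] [CharZero K] [CommRing A] [Algebra K A]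
    (𝒜 : ℕ → Submodule K A) [GradedAlgebra 𝒜]
    (hfin : ∀ i : ℕ, Module.Finite K (𝒜 i))
    (h0 : 𝒜 0 = 1)
    (hstd : ∀ n : ℕ, 𝒜 (n + 1) = 𝒜 1 * 𝒜 n)
    (hWLP : ∃ e ∈ 𝒜 1, ∀ i : ℕ,
      (∀ a ∈ 𝒜 i, ∀ b ∈ 𝒜 i, e * a = e * b → a = b) ∨
      (∀ c ∈ 𝒜 (i + 1), ∃ a ∈ 𝒜 i, e * a = c)) :
    Monotone (fun i : ℕ => Module.finrank K (𝒜 i)) ∨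
    ∃ k : ℕ,
      (∀ i j : ℕ, i ≤ j → j ≤ k → Module.finrank K (𝒜 i) ≤ Module.finrank K (𝒜 j)) ∧
      (∀ i j : ℕ, k ≤ i → i ≤ j → Module.finrank K (𝒜 j) ≤ Module.finrank K (𝒜 i)) :=
  wlp_implies_increasing_or_unimodal_hilbert_function_general 𝒜 hfin hstd hWLP
end

section
/- Let A be a central hyperplane arrangement in K^l whose module of logarithmic vector fields D(A) is free with a homogeneous basis δ_1,...,δ_l of polynomial degrees e_1,...,e_l. Then e_1 + ... + e_l = n, the number of hyperplanes of A. (Saito's criterion, one direction: if δ_1,...,δ_l is a basis of D(A), then det(δ_i(x_j)) = c·Q(A) for some nonzero c ∈ K, hence the degrees sum to n.) -/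
open MvPolynomial

namespace SaitoAux

variable {K : Type} [Field K] {l : ℕ}

lemma exists_single_of_degree_one {d : Fin l →₀ ℕ} (hd : d.degree = 1) :
    ∃ j, d = Finsupp.single j 1 := by
  have hd0 : d ≠ 0 := by
    intro h; rw [h] at hd; simp at hd
  obtain ⟨j, hj⟩ : ∃ j, d j ≠ 0 := by
    by_contra h
    push_neg at h
    exact hd0 (Finsupp.ext fun a => h a)
  have hj1 : d j = 1 := by
    have h1 : d j ≤ 1 := hd ▸ Finsupp.le_degree j d
    omega
  refine ⟨j, Finsupp.ext fun k => ?_⟩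
  rcases eq_or_ne k j with rfl | hk
  · simp [hj1]
  · rw [Finsupp.single_apply, if_neg (by exact fun h => hk h.symm)]
    by_contra hk0
    have hks : k ∈ d.support := Finsupp.mem_support_iff.mpr hk0
    have hjs : j ∈ d.support := Finsupp.mem_support_iff.mpr hj
    have h2 : d j + d k ≤ d.degree := by
      have : ({j, k} : Finset (Fin l)) ⊆ d.support := by
        intro x hx
        simp only [Finset.mem_insert, Finset.mem_singleton] at hx
        rcases hx with rfl | rfl <;> assumption
      calc d j + d k = ∑ x ∈ ({j, k} : Finset (Fin l)), d x := by
            rw [Finset.sum_pair (fun h => hk h.symm)]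
        _ ≤ ∑ x ∈ d.support, d x := Finset.sum_le_sum_of_subset this
        _ = d.degree := rfl
    omega

lemma degree_add (a b : Fin l →₀ ℕ) : (a + b).degree = a.degree + b.degree := by
  simp only [Finsupp.degree_eq_weight_one]
  exact map_add _ a b

lemma homogeneousComponent_totalDegree_ne_zero {p : MvPolynomial (Fin l) K} (hp : p ≠ 0) :
    homogeneousComponent p.totalDegree p ≠ 0 := by
  obtain ⟨d, hd, hdeg⟩ : ∃ d ∈ p.support, (fun s : Fin l →₀ ℕ => s.sum fun _ e => e) d
      = p.totalDegree := by
    obtain ⟨d, hd, h⟩ := Finset.exists_mem_eq_sup p.support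
      (MvPolynomial.support_nonempty.mpr hp) (fun s : Fin l →₀ ℕ => s.sum fun _ e => e)
    exact ⟨d, hd, h.symm⟩
  intro h
  have := coeff_homogeneousComponent (φ := p) p.totalDegree d
  rw [h, coeff_zero] at this
  have hdd : d.degree = p.totalDegree := by
    rw [← hdeg]; simp [Finsupp.degree, Finsupp.sum]; rfl
  rw [if_pos hdd] at this
  exact (Finsupp.mem_support_iff.mp hd) this.symm

lemma homogeneousComponent_top_mul (p q : MvPolynomial (Fin l) K) :
    homogeneousComponent (p.totalDegree + q.totalDegree) (p * q)
      = homogeneousComponent p.totalDegree p * homogeneousComponent q.totalDegree q := by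
  classical
  ext d
  rw [coeff_homogeneousComponent]
  by_cases hd : d.degree = p.totalDegree + q.totalDegree
  · rw [if_pos hd, coeff_mul, coeff_mul]
    refine Finset.sum_congr rfl ?_
    rintro ⟨d1, d2⟩ hx
    rw [Finset.HasAntidiagonal.mem_antidiagonal] at hx
    have hsum : d1.degree + d2.degree = p.totalDegree + q.totalDegree := by
      rw [← degree_add, hx, hd]
    simp only [coeff_homogeneousComponent]
    by_cases h1 : d1.degree = p.totalDegree
    · rw [if_pos h1, if_pos (by omega)]
    · rw [if_neg h1]
      rcases lt_or_gt_of_ne h1 with hlt | hgt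
      · have h2 : q.totalDegree < d2.degree := by omega
        have : coeff d2 q = 0 := coeff_eq_zero_of_totalDegree_lt
          (by exact h2)
        simp [this]
      · have : coeff d1 p = 0 := coeff_eq_zero_of_totalDegree_lt
          (by exact hgt)
        simp [this]
  · rw [if_neg hd]
    have : ((homogeneousComponent p.totalDegree p) *
        (homogeneousComponent q.totalDegree q)).IsHomogeneous
        (p.totalDegree + q.totalDegree) :=
      (homogeneousComponent_isHomogeneous _ _).mul (homogeneousComponent_isHomogeneous _ _)
    exact (this.coeff_eq_zero hd).symm

lemma totalDegree_mul_eq {p q : MvPolynomial (Fin l) K} (hp : p ≠ 0) (hq : q ≠ 0) :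
    (p * q).totalDegree = p.totalDegree + q.totalDegree := by
  refine le_antisymm (totalDegree_mul p q) ?_
  by_contra h
  push_neg at h
  have h0 : homogeneousComponent (p.totalDegree + q.totalDegree) (p * q) = 0 :=
    homogeneousComponent_eq_zero _ _ h
  rw [homogeneousComponent_top_mul] at h0
  exact mul_ne_zero (homogeneousComponent_totalDegree_ne_zero hp)
    (homogeneousComponent_totalDegree_ne_zero hq) h0

lemma totalDegree_eq_zero_of_isUnit {p : MvPolynomial (Fin l) K} (h : IsUnit p) :
    p.totalDegree = 0 := by
  obtain ⟨v, hv⟩ : p ∣ 1 := h.dvd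
  have hp : p ≠ 0 := fun h0 => by simp [h0] at hv
  have hv0 : v ≠ 0 := fun h0 => by simp [h0] at hv
  have := totalDegree_mul_eq hp hv0
  rw [← hv, totalDegree_one] at this
  omega

lemma eq_C_of_totalDegree_eq_zero {p : MvPolynomial (Fin l) K} (h : p.totalDegree = 0) :
    p = C (coeff 0 p) := by
  rw [totalDegree_eq_zero_iff] at h
  ext d
  rcases eq_or_ne d 0 with rfl | hd
  · simp
  · rw [coeff_C, if_neg (fun hh => hd hh.symm)]
    by_contra hc
    exact hd (Finsupp.ext fun x => h d (Finsupp.mem_support_iff.mpr hc) x)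

lemma prime_of_homog_one {p : MvPolynomial (Fin l) K} (h : p.IsHomogeneous 1) (hp : p ≠ 0) :
    Prime p := by
  rw [← UniqueFactorizationMonoid.irreducible_iff_prime]
  constructor
  · intro hu
    have h0 := totalDegree_eq_zero_of_isUnit hu
    rw [h.totalDegree hp] at h0
    exact one_ne_zero h0
  · intro a b hab
    have ha : a ≠ 0 := fun h0 => hp (by rw [hab, h0, zero_mul])
    have hb : b ≠ 0 := fun h0 => hp (by rw [hab, h0, mul_zero])
    have hdeg : a.totalDegree + b.totalDegree = 1 := by
      rw [← totalDegree_mul_eq ha hb, ← hab, h.totalDegree hp]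
    have hunit : ∀ r : MvPolynomial (Fin l) K, r ≠ 0 → r.totalDegree = 0 → IsUnit r := by
      intro r hr hr0
      rw [eq_C_of_totalDegree_eq_zero hr0]
      have : coeff 0 r ≠ 0 := fun hh => hr (by
        rw [eq_C_of_totalDegree_eq_zero hr0, hh, map_zero])
      exact IsUnit.of_mul_eq_one (C (coeff 0 r)⁻¹) (by
        rw [← map_mul, mul_inv_cancel₀ this, map_one])
    rcases Nat.eq_zero_or_pos a.totalDegree with h0 | h0
    · exact Or.inl (hunit a ha h0)
    · exact Or.inr (hunit b hb (by omega))

lemma repr_of_homog_one {p : MvPolynomial (Fin l) K} (h : p.IsHomogeneous 1) :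
    p = ∑ j, C (coeff (Finsupp.single j 1) p) * X j := by
  classical
  ext d
  rw [coeff_sum]
  by_cases hd : ∃ j, d = Finsupp.single j 1
  · obtain ⟨j, rfl⟩ := hd
    rw [Finset.sum_eq_single j]
    · rw [coeff_C_mul, coeff_X', if_pos rfl, mul_one]
    · intro b _ hbj
      rw [coeff_C_mul, coeff_X', if_neg, mul_zero]
      intro hh
      exact hbj (Finsupp.single_left_injective one_ne_zero hh)
    · intro hj
      exact absurd (Finset.mem_univ j) hj
  · have h1 : coeff d p = 0 := by
      by_contra hc
      refine hd ?_
      obtain ⟨j, hj⟩ := exists_single_of_degree_one (d := d) (by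
        by_contra hdeg
        exact hc (h.coeff_eq_zero hdeg))
      exact ⟨j, hj⟩
    rw [h1]
    symm
    refine Finset.sum_eq_zero fun j _ => ?_
    rw [coeff_C_mul, coeff_X', if_neg (fun hh => hd ⟨j, hh.symm⟩), mul_zero]

lemma pderiv_of_homog_one {p : MvPolynomial (Fin l) K} (h : p.IsHomogeneous 1) (j : Fin l) :
    pderiv j p = C (coeff (Finsupp.single j 1) p) := by
  conv_lhs => rw [repr_of_homog_one h]
  rw [map_sum, Finset.sum_eq_single j]
  · rw [pderiv_C_mul, pderiv_X_self, mul_one]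
  · intro b _ hbj
    rw [pderiv_C_mul, pderiv_X_of_ne hbj, mul_zero]
  · intro hj
    exact absurd (Finset.mem_univ j) hj

lemma euler_of_homog_one {p : MvPolynomial (Fin l) K} (h : p.IsHomogeneous 1) :
    ∑ j, X j * pderiv j p = p := by
  conv_rhs => rw [repr_of_homog_one h]
  refine Finset.sum_congr rfl fun j _ => ?_
  rw [pderiv_of_homog_one h j, mul_comm]

end SaitoAux

set_option maxHeartbeats 4000000 in
open SaitoAux Matrix in
/-- Saito's criterion, one direction: if the module of logarithmic vector fields of a
central arrangement of `n` (pairwise distinct) hyperplanes in `K^l` is free with a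
homogeneous basis of polynomial degrees `e 1, …, e l`, then the degrees sum to `n`. -/
theorem free_arrangement_exponents_sum_to_card
    {K : Type} [Field K] [CharZero K] {l n : ℕ}
    (α : Fin n → MvPolynomial (Fin l) K)
    (hhom : ∀ i, (α i).IsHomogeneous 1)
    (hne : ∀ i, α i ≠ 0)
    (hdist : ∀ i j, i ≠ j → ∀ c : K, α i ≠ c • α j)
    (DA : Submodule (MvPolynomial (Fin l) K) (Fin l → MvPolynomial (Fin l) K))
    (hDA : ∀ f : Fin l → MvPolynomial (Fin l) K,
      f ∈ DA ↔ ∀ i, (∑ j, f j * pderiv j (α i)) ∈ Ideal.span {α i})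
    (δ : Fin l → Fin l → MvPolynomial (Fin l) K) (e : Fin l → ℕ)
    (hind : LinearIndependent (MvPolynomial (Fin l) K) δ)
    (hspan : Submodule.span (MvPolynomial (Fin l) K) (Set.range δ) = DA)
    (hdeg : ∀ k j, (δ k j).IsHomogeneous (e k)) :
    ∑ k, e k = n := by
  classical
  set M : Matrix (Fin l) (Fin l) (MvPolynomial (Fin l) K) := Matrix.of δ with hM
  have hδDA : ∀ k, δ k ∈ DA := fun k => hspan ▸ Submodule.subset_span (Set.mem_range_self k)
  have hdethom : M.det.IsHomogeneous (∑ k, e k) := by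
    rw [Matrix.det_apply, ← mem_homogeneousSubmodule]
    refine Submodule.sum_mem _ fun σp _ => ?_
    have hprod : (∏ k, M (σp k) k).IsHomogeneous (∑ k, e k) := by
      have h1 := MvPolynomial.IsHomogeneous.prod Finset.univ (fun k => M (σp k) k)
        (fun k => e (σp k)) (fun k _ => hdeg (σp k) k)
      rwa [Equiv.sum_comp σp e] at h1
    rcases Int.units_eq_one_or (Equiv.Perm.sign σp) with hs | hs <;> rw [hs]
    · simpa using (mem_homogeneousSubmodule _ _).mpr hprod
    · have hneg : ((-1 : ℤˣ) • (∏ k, M (σp k) k)) = -(∏ k, M (σp k) k) := by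
        simp [Units.smul_def]
      rw [hneg]
      exact neg_mem ((mem_homogeneousSubmodule _ _).mpr hprod)
  have hdvdpsi : ∀ ψ : Matrix (Fin l) (Fin l) (MvPolynomial (Fin l) K),
      (∀ k, ψ k ∈ DA) → M.det ∣ ψ.det := by
    intro ψ hψ
    have hmem : ∀ k, ψ k ∈ Submodule.span (MvPolynomial (Fin l) K) (Set.range δ) := by
      rw [hspan]; exact hψ
    have hex : ∀ k, ∃ gk : Fin l → MvPolynomial (Fin l) K, ∑ m, gk m • δ m = ψ k :=
      fun k => (Submodule.mem_span_range_iff_exists_fun _).mp (hmem k)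
    choose G hG using hex
    have hfact : ψ = Matrix.of G * M := by
      refine Matrix.ext fun k j => ?_
      rw [Matrix.mul_apply]
      have h2 := congrFun (hG k) j
      simp only [Finset.sum_apply, Pi.smul_apply, smul_eq_mul] at h2
      exact h2.symm
    rw [hfact, Matrix.det_mul]
    exact Dvd.intro_left _ rfl
  rcases Nat.eq_zero_or_pos n with hn | hn
  · haveI hempty : IsEmpty (Fin n) := by rw [hn]; infer_instance
    have h1 : M.det ∣ (1 : Matrix (Fin l) (Fin l) (MvPolynomial (Fin l) K)).det :=
      hdvdpsi 1 fun k => (hDA _).mpr fun i => (hempty.false i).elim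
    rw [Matrix.det_one] at h1
    have hu : IsUnit M.det := isUnit_of_dvd_one h1
    have h0 := totalDegree_eq_zero_of_isUnit hu
    rw [hdethom.totalDegree hu.ne_zero] at h0
    omega
  · have hprime : ∀ i, Prime (α i) := fun i => prime_of_homog_one (hhom i) (hne i)
    set c : Fin n → Fin l → K := fun i j => coeff (Finsupp.single j 1) (α i) with hcdef
    have hpd : ∀ i j, pderiv j (α i) = C (c i j) := fun i j => pderiv_of_homog_one (hhom i) j
    have hrepr : ∀ i, α i = ∑ j, C (c i j) * X j := fun i => repr_of_homog_one (hhom i)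
    have hgrad : ∀ i, ∃ j0, c i j0 ≠ 0 := by
      intro i
      by_contra h
      push_neg at h
      refine hne i ?_
      rw [hrepr i]
      refine Finset.sum_eq_zero fun j _ => ?_
      rw [h j, _root_.map_zero, zero_mul]
    have hnotdvd : ∀ i j, i ≠ j → ¬ α i ∣ α j := by
      rintro i j hij ⟨v, hv⟩
      have hv0 : v ≠ 0 := fun h => hne j (by rw [hv, h, mul_zero])
      have hdeg1 : (α i).totalDegree + v.totalDegree = 1 := by
        rw [← totalDegree_mul_eq (hne i) hv0, ← hv, (hhom j).totalDegree (hne j)]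
      rw [(hhom i).totalDegree (hne i)] at hdeg1
      have hv1 : v = C (coeff 0 v) := eq_C_of_totalDegree_eq_zero (by omega)
      refine hdist j i (Ne.symm hij) (coeff 0 v) ?_
      rw [smul_eq_C_mul, mul_comm, ← hv1]
      exact hv
    obtain ⟨j00, hj00⟩ := hgrad ⟨0, hn⟩
    haveI : Nonempty (Fin l) := ⟨j00⟩
    have hdet0 : M.det ≠ 0 := by
      intro h
      have h' : (Matrix.of δ)ᵀ.det = 0 := by rw [Matrix.det_transpose]; exact h
      obtain ⟨v, hv0, hv⟩ := Matrix.exists_mulVec_eq_zero_iff.mpr h'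
      have hz : ∀ kk, v kk = 0 := by
        refine Fintype.linearIndependent_iff.mp hind v ?_
        funext j
        have hj := congrFun hv j
        simp only [Matrix.mulVec, dotProduct, Matrix.transpose_apply,
          Matrix.of_apply, Pi.zero_apply] at hj
        simp only [Finset.sum_apply, Pi.smul_apply, smul_eq_mul, Pi.zero_apply]
        rw [← hj]
        exact Finset.sum_congr rfl fun k _ => mul_comm _ _
      exact hv0 (funext hz)
    have hαdvd : ∀ i, α i ∣ M.det := by
      intro i
      haveI hIp : (Ideal.span {α i}).IsPrime :=
        (Ideal.span_singleton_prime (hne i)).mpr (hprime i)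
      set f := Ideal.Quotient.mk (Ideal.span {α i}) with hf
      have hdetmap : (M.map f).det = 0 := by
        rw [← Matrix.exists_mulVec_eq_zero_iff]
        refine ⟨fun j => f (C (c i j)), ?_, ?_⟩
        · obtain ⟨j1, hj1⟩ := hgrad i
          intro hzero
          have h0 := congrFun hzero j1
          rw [Pi.zero_apply, Ideal.Quotient.eq_zero_iff_mem, Ideal.mem_span_singleton] at h0
          have hu : IsUnit (C (c i j1) : MvPolynomial (Fin l) K) :=
            IsUnit.of_mul_eq_one (C (c i j1)⁻¹)
              (by rw [← _root_.map_mul, mul_inv_cancel₀ hj1, _root_.map_one])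
          exact (hprime i).not_isUnit (isUnit_of_dvd_unit h0 hu)
        · funext k
          have hmem : (∑ j, δ k j * pderiv j (α i)) ∈ Ideal.span {α i} :=
            (hDA (δ k)).mp (hδDA k) i
          simp only [Matrix.mulVec, dotProduct, Matrix.map_apply, Matrix.of_apply,
            Pi.zero_apply]
          calc ∑ j, f (δ k j) * f (C (c i j))
              = ∑ j, f (δ k j * pderiv j (α i)) :=
                Finset.sum_congr rfl fun j _ => by rw [hpd i j, _root_.map_mul]
            _ = f (∑ j, δ k j * pderiv j (α i)) := (map_sum f _ _).symm
            _ = 0 := Ideal.Quotient.eq_zero_iff_mem.mpr hmem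
      rw [← Ideal.mem_span_singleton, ← Ideal.Quotient.eq_zero_iff_mem]
      show f M.det = 0
      rw [RingHom.map_det]
      exact hdetmap
    have hProd : ∀ s : Finset (Fin n), (∏ m ∈ s, α m) ∣ M.det := by
      intro s
      induction s using Finset.induction_on with
      | empty => simpa using ⟨M.det, (one_mul _).symm⟩
      | @insert i s his ih =>
        obtain ⟨t, ht⟩ := ih
        have hita : α i ∣ (∏ m ∈ s, α m) * t := ht ▸ hαdvd i
        have hit : α i ∣ t := by
          rcases (hprime i).2.2 _ _ hita with hL | hR
          · exfalso
            obtain ⟨m, hms, hm⟩ := (Prime.dvd_finset_prod_iff (hprime i) _).mp hL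
            exact hnotdvd i m (fun h => his (h ▸ hms)) hm
          · exact hR
        obtain ⟨u, hu⟩ := hit
        refine ⟨u, ?_⟩
        rw [Finset.prod_insert his, ht, hu]
        ring
    have hdetdvd : ∀ i, M.det ∣ α i * (∏ m ∈ Finset.univ.erase i, α m) ^ (l - 1) := by
      intro i
      obtain ⟨j0, hj0⟩ := hgrad i
      obtain ⟨q, hqdef⟩ : ∃ q : MvPolynomial (Fin l) K, q = ∏ m ∈ Finset.univ.erase i, α m :=
        ⟨_, rfl⟩
      obtain ⟨ψ, hψdef⟩ : ∃ ψ : Matrix (Fin l) (Fin l) (MvPolynomial (Fin l) K),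
          ψ = Matrix.of (fun j k =>
            if j = j0 then X k
            else q * ((if k = j then 1 else 0) +
              (if k = j0 then C (-(c i j) * (c i j0)⁻¹) else 0))) := ⟨_, rfl⟩
      have hψDA : ∀ jj, ψ jj ∈ DA := by
        intro jj
        rw [hDA]
        intro m
        by_cases hjj : jj = j0
        · have heuler : ∑ k, ψ jj k * pderiv k (α m) = α m := by
            simp only [hψdef, Matrix.of_apply, if_pos hjj]
            exact euler_of_homog_one (hhom m)
          rw [heuler]
          exact Ideal.mem_span_singleton_self _
        · have hrow : ∑ k, ψ jj k * pderiv k (α m)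
              = q * (C (c m jj) + C (-(c i jj) * (c i j0)⁻¹) * C (c m j0)) := by
            simp only [hψdef, Matrix.of_apply, if_neg hjj, hpd]
            have hterm : ∀ k : Fin l, (q * ((if k = jj then (1 : MvPolynomial (Fin l) K) else 0) +
                (if k = j0 then C (-(c i jj) * (c i j0)⁻¹) else 0))) * C (c m k)
                = q * ((if k = jj then C (c m k) else 0) +
                  (if k = j0 then C (-(c i jj) * (c i j0)⁻¹) * C (c m k) else 0)) := by
              intro k
              rw [mul_assoc, add_mul, ite_mul, ite_mul, one_mul, zero_mul]
            rw [Finset.sum_congr rfl (fun k _ => hterm k), ← Finset.mul_sum,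
              Finset.sum_add_distrib,
              Finset.sum_ite_eq' Finset.univ jj (fun k => C (c m k)),
              Finset.sum_ite_eq' Finset.univ j0
                (fun k => C (-(c i jj) * (c i j0)⁻¹) * C (c m k)),
              if_pos (Finset.mem_univ jj), if_pos (Finset.mem_univ j0)]
          by_cases hmi : m = i
          · subst hmi
            rw [hrow]
            have hzero : C (c m jj) + C (-(c m jj) * (c m j0)⁻¹) * C (c m j0)
                = (0 : MvPolynomial (Fin l) K) := by
              rw [← _root_.map_mul, ← _root_.map_add, show c m jj + -(c m jj) * (c m j0)⁻¹ * c m j0 = 0 by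
                field_simp; ring, _root_.map_zero]
            rw [hzero, mul_zero]
            exact Ideal.zero_mem _
          · rw [hrow]
            refine Ideal.mem_span_singleton.mpr (Dvd.dvd.mul_right ?_ _)
            rw [hqdef]
            exact Finset.dvd_prod_of_mem _ (Finset.mem_erase.mpr ⟨hmi, Finset.mem_univ m⟩)
      obtain ⟨W, hWdef⟩ : ∃ W : Matrix (Fin l) (Fin l) (MvPolynomial (Fin l) K),
          W = Matrix.of (fun jj k =>
            if k = j0 then C (c i jj) else if k = jj then (1 : MvPolynomial (Fin l) K) else 0) :=
        ⟨_, rfl⟩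
      obtain ⟨v, hvdef⟩ : ∃ v : Fin l → MvPolynomial (Fin l) K,
          v = fun jj => if jj = j0 then α i else X jj := ⟨_, rfl⟩
      have hψW : ψ * W =
          ((q • (1 : Matrix (Fin l) (Fin l) (MvPolynomial (Fin l) K))).updateCol j0 v)ᵀ := by
        refine Matrix.ext fun jj k => ?_
        rw [Matrix.mul_apply, Matrix.transpose_apply, Matrix.updateCol_apply]
        by_cases hjj : jj = j0
        · rw [if_pos hjj, hjj]
          have hXrow : ∀ m, ψ j0 m = X m := fun m => by
            simp only [hψdef, Matrix.of_apply, eq_self_iff_true, if_true]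
          rw [show (∑ m, ψ j0 m * W m k) = ∑ m, X m * W m k from
            Finset.sum_congr rfl fun m _ => by rw [hXrow m]]
          by_cases hk : k = j0
          · rw [hk]
            have hW0 : ∀ m, W m j0 = C (c i m) := fun m => by
              simp only [hWdef, Matrix.of_apply, eq_self_iff_true, if_true]
            rw [show (∑ m, X m * W m j0) = ∑ m, C (c i m) * X m from
              Finset.sum_congr rfl fun m _ => by rw [hW0 m, mul_comm], ← hrepr i]
            simp only [hvdef, eq_self_iff_true, if_true]
          · have hWk : ∀ m, W m k = if k = m then 1 else 0 := fun m => by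
              simp only [hWdef, Matrix.of_apply, if_neg hk]
            rw [show (∑ m, X m * W m k) = ∑ m, if k = m then X m else 0 from
              Finset.sum_congr rfl fun m _ => by rw [hWk m, mul_ite, mul_one, mul_zero],
              Finset.sum_ite_eq Finset.univ k X, if_pos (Finset.mem_univ k)]
            simp only [hvdef]
            rw [if_neg hk]
        · rw [if_neg hjj]
          have hrow2 : ∀ m, ψ jj m = q * ((if m = jj then 1 else 0) +
              (if m = j0 then C (-(c i jj) * (c i j0)⁻¹) else 0)) := fun m => by
            simp only [hψdef, Matrix.of_apply, if_neg hjj]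
          have hterm2 : ∀ m, ψ jj m * W m k
              = q * ((if m = jj then W m k else 0) +
                (if m = j0 then C (-(c i jj) * (c i j0)⁻¹) * W m k else 0)) := fun m => by
            rw [hrow2 m, mul_assoc, add_mul, ite_mul, ite_mul, one_mul, zero_mul]
          rw [Finset.sum_congr rfl fun m _ => hterm2 m, ← Finset.mul_sum,
            Finset.sum_add_distrib, Finset.sum_ite_eq' Finset.univ jj (fun m => W m k),
            Finset.sum_ite_eq' Finset.univ j0
              (fun m => C (-(c i jj) * (c i j0)⁻¹) * W m k),
            if_pos (Finset.mem_univ jj), if_pos (Finset.mem_univ j0)]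
          rw [Matrix.smul_apply, Matrix.one_apply, smul_eq_mul]
          by_cases hk : k = j0
          · rw [hk]
            have hW1 : W jj j0 = C (c i jj) := by
              simp only [hWdef, Matrix.of_apply, eq_self_iff_true, if_true]
            have hW2 : W j0 j0 = C (c i j0) := by
              simp only [hWdef, Matrix.of_apply, eq_self_iff_true, if_true]
            rw [hW1, hW2, if_neg (fun h : (j0 : Fin l) = jj => hjj h.symm),
              ← _root_.map_mul, ← _root_.map_add,
              show c i jj + -(c i jj) * (c i j0)⁻¹ * c i j0 = 0 by field_simp; ring,
              _root_.map_zero, mul_zero]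
          · have hW1 : W jj k = if k = jj then 1 else 0 := by
              simp only [hWdef, Matrix.of_apply, if_neg hk]
            have hW2 : W j0 k = 0 := by
              simp only [hWdef, Matrix.of_apply]
              rw [if_neg hk, if_neg hk]
            rw [hW1, hW2, mul_zero, add_zero]
      have hdetq : ψ.det * W.det = q ^ (l - 1) * α i := by
        rw [← Matrix.det_mul, hψW, Matrix.det_transpose,
          show ((q • (1 : Matrix (Fin l) (Fin l) (MvPolynomial (Fin l) K))).updateCol j0 v).det
            = Matrix.cramer (q • (1 : Matrix (Fin l) (Fin l) (MvPolynomial (Fin l) K))) v j0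
            from (Matrix.cramer_apply _ _ _).symm,
          Matrix.cramer_smul]
        simp only [LinearMap.smul_apply, Matrix.cramer_one, Module.End.one_apply,
          Pi.smul_apply, smul_eq_mul, Fintype.card_fin]
        simp only [hvdef, eq_self_iff_true, if_true]
      have h1 : M.det ∣ ψ.det * W.det := (hdvdpsi ψ hψDA).mul_right _
      rw [hdetq, hqdef] at h1
      rwa [mul_comm] at h1
    obtain ⟨g, hg⟩ := hProd Finset.univ
    have hg0 : g ≠ 0 := fun h => hdet0 (by rw [hg, h, mul_zero])
    have hgunit : IsUnit g := by
      by_contra hgu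
      obtain ⟨p, hpirr, hpg⟩ := WfDvdMonoid.exists_irreducible_factor hgu hg0
      have hpp : Prime p := UniqueFactorizationMonoid.irreducible_iff_prime.mp hpirr
      have hpdet : p ∣ M.det := hg ▸ hpg.mul_left _
      have hm : ∃ m, p ∣ α m := by
        rcases hpp.2.2 _ _ (hpdet.trans (hdetdvd ⟨0, hn⟩)) with h | h
        · exact ⟨⟨0, hn⟩, h⟩
        · obtain ⟨m, _, hdm⟩ := (Prime.dvd_finset_prod_iff hpp _).mp (hpp.dvd_of_dvd_pow h)
          exact ⟨m, hdm⟩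
      obtain ⟨m, hpm⟩ := hm
      have hassoc : Associated p (α m) := hpp.associated_of_dvd (hprime m) hpm
      have hαg : α m ∣ g := (hassoc.symm.dvd).trans hpg
      have hsq : α m * α m ∣ M.det := by
        obtain ⟨t, ht⟩ := hαg
        rw [hg, ← Finset.mul_prod_erase Finset.univ α (Finset.mem_univ m), ht]
        exact ⟨(∏ mm ∈ Finset.univ.erase m, α mm) * t, by ring⟩
      have h2 : α m * α m ∣ α m * (∏ mm ∈ Finset.univ.erase m, α mm) ^ (l - 1) :=
        hsq.trans (hdetdvd m)
      have h3 : α m ∣ (∏ mm ∈ Finset.univ.erase m, α mm) ^ (l - 1) :=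
        (mul_dvd_mul_iff_left (hne m)).mp h2
      obtain ⟨m', hm', hdm'⟩ := (Prime.dvd_finset_prod_iff (hprime m) _).mp
        ((hprime m).dvd_of_dvd_pow h3)
      exact hnotdvd m m' (Ne.symm (Finset.mem_erase.mp hm').1) hdm'
    have hdethomn : M.det.IsHomogeneous n := by
      have hgC : g = C (coeff 0 g) :=
        eq_C_of_totalDegree_eq_zero (totalDegree_eq_zero_of_isUnit hgunit)
      have hPhom : (∏ m, α m).IsHomogeneous n := by
        have hh := MvPolynomial.IsHomogeneous.prod Finset.univ α (fun _ => 1)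
          (fun m _ => hhom m)
        simpa using hh
      rw [hg, hgC]
      simpa using hPhom.mul (isHomogeneous_C _ _)
    exact hdethom.inj_right hdethomn hdet0
end
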